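/- Let f ∈ Γ(X). Assume σ is Farkas–Minkowski and f is finite and continuous at some point of A. Then epi f* + K = epi (f + δ_A)*, and in particular epi f* + K is weak*-closed. -/

import Mathlib

open Pointwise

noncomputable section

variable {X : Type*} [AddCommGroup X] [Module ℝ X] [TopologicalSpace X]

/-- Fenchel conjugate, as a function on the weak-* dual. -/
def conjFn (h : X → EReal) : WeakDual ℝ X → EReal :=
  fun p => ⨆ x : X, (p x : EReal) - h x

/-- Epigraph of an extended-real-valued function. -/
def epiFn {V : Type*} (h : V → EReal) : Set (V × ℝ) :=
  {q | h q.1 ≤ (q.2 : EReal)}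

/-- Graph of an extended-real-valued function (where it is finite). -/
def gphFn {V : Type*} (h : V → EReal) : Set (V × ℝ) :=
  {q | h q.1 = (q.2 : EReal)}

/-- Effective domain. -/
def domFn {V : Type*} (h : V → EReal) : Set V :=
  {x | h x < ⊤}

open Classical in
/-- Indicator function of a set. -/
def indicatorE {V : Type*} (D : Set V) : V → EReal :=
  fun x => if x ∈ D then (0 : EReal) else ⊤

/-- Convex cone generated by `D ∪ {0}`. -/
def coneGen {V : Type*} [AddCommGroup V] [Module ℝ V] (D : Set V) : Set V :=
  {0} ∪ {y | ∃ t : ℝ, 0 ≤ t ∧ ∃ x ∈ convexHull ℝ D, y = t • x}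

/-- `h ∈ Γ(X)`: proper, convex and lower semicontinuous. -/
def InGamma (h : X → EReal) : Prop :=
  (∀ x, h x ≠ ⊥) ∧ (∃ x, h x ≠ ⊤) ∧
    Convex ℝ {q : X × ℝ | h q.1 ≤ (q.2 : EReal)} ∧ LowerSemicontinuous h

/-- Solution set `A` of the system `σ = {f i x ≤ 0, i ∈ I; x ∈ C}`. -/
def solSet {I : Type*} (C : Set X) (f : I → X → EReal) : Set X :=
  {x | x ∈ C ∧ ∀ i, f i x ≤ (0 : EReal)}

/-- Characteristic cone `K = cone (epi δ_C* ∪ ⋃ i, epi f_i*)` of the system. -/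
def charCone {I : Type*} (C : Set X) (f : I → X → EReal) : Set (WeakDual ℝ X × ℝ) :=
  coneGen (epiFn (conjFn (indicatorE C)) ∪ ⋃ i, epiFn (conjFn (f i)))

/-- Barrier cone `barr C = dom δ_C*`. -/
def barCone (C : Set X) : Set (WeakDual ℝ X) :=
  domFn (conjFn (indicatorE C))

/-- The Farkas–Minkowski constraint qualification. -/
def IsFM {I : Type*} (C : Set X) (f : I → X → EReal) : Prop :=
  (solSet C f).Nonempty ∧ IsClosed (charCone C f)

/-- Recession function `h^∞ = δ*_{dom h*}`. -/
def recFn (h : X → EReal) : X → EReal :=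
  fun x => ⨆ q ∈ domFn (conjFn h), ((q x : ℝ) : EReal)

/-- Recession cone `D^∞ = ⋂_{t>0} t (D - a)`, for any `a ∈ D`. -/
def recCone (D : Set X) : Set X :=
  {d | ∀ a ∈ D, ∀ t : ℝ, 0 < t → d ∈ t • (D - ({a} : Set X))}

/-- Subdifferential of `h` at `a`. -/
def subdiff (h : X → EReal) (a : X) : Set (WeakDual ℝ X) :=
  {p | (∃ r : ℝ, h a = (r : EReal)) ∧ ∀ x, h a + ((p (x - a) : ℝ) : EReal) ≤ h x}

/-!
Under the Farkas–Minkowski condition the characteristic cone `K` equals `epi δ_A*`. The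
inclusion `K ⊆ epi δ_A*` always holds. Conversely, a point of `epi δ_A*` outside the
weak*-closed convex cone `K` is separated from it by a functional `(p, r) ↦ p x + α r` (every
weak*-continuous functional is an evaluation). Tilting the separator towards a point of `A`
makes `α < 0`, and then `x / (-α)` satisfies every inequality encoded in `K`; by Fenchel–Moreau
it lies in `A`, which contradicts the separation.

The theorem is thereby reduced to the sum rule `epi g* + epi δ_A* = epi (g + δ_A)*`. Since `g`
is continuous at a point of `A`, `epi g` has nonempty interior. Separating that interior from
the region of `A × ℝ` below an affine minorant of `g` on `A` gives a non-vertical hyperplane,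
and the hyperplane splits the minorant. Finally, the epigraph of a conjugate is an
intersection of closed half-spaces, hence weak*-closed.
-/

open Set Topology Filter

lemma nonpos_of_forall_le_add_mul {m α u t₀ : ℝ} (h : ∀ t, t₀ ≤ t → m + α * t ≤ u) :
    α ≤ 0 := by
  by_contra! hα
  have := h (max t₀ ((u - m) / α + 1)) (le_max_left _ _)
  have hmax : (u - m) / α + 1 ≤ max t₀ ((u - m) / α + 1) := le_max_right _ _
  rw [← sub_le_sub_iff_right 1, add_sub_cancel_right, div_le_iff₀ hα] at hmax
  nlinarith

lemma StrongDual.exists_eq_prod_real {V : Type*} [AddCommGroup V] [Module ℝ V]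
    [TopologicalSpace V] (F : StrongDual ℝ (V × ℝ)) :
    ∃ (ℓ : StrongDual ℝ V) (γ : ℝ), ∀ q, F q = ℓ q.1 + γ * q.2 := by
  refine ⟨F.comp (.inl ℝ V ℝ), F (0, 1), fun q => ?_⟩
  rw [← F.comp_inl_add_comp_inr q, mul_comm, ← smul_eq_mul, ← map_smul]
  simp

instance : LocallyConvexSpace ℝ (WeakDual ℝ X) :=
  inferInstanceAs (LocallyConvexSpace ℝ (WeakBilin (topDualPairing ℝ X)))

namespace WeakDual

variable (p w : WeakDual ℝ X) (x : X) (s : ℝ)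

@[simp] lemma add_apply : (p + w) x = p x + w x := rfl

@[simp] lemma sub_apply : (p - w) x = p x - w x := rfl

@[simp] lemma smul_apply : (s • p) x = s * p x := rfl

@[simp] lemma zero_apply : (0 : WeakDual ℝ X) x = 0 := rfl

lemma exists_eq_apply (G : StrongDual ℝ (WeakDual ℝ X)) :
    ∃ x : X, ∀ p : WeakDual ℝ X, G p = p x := by
  obtain ⟨x, rfl⟩ := LinearMap.dualEmbedding_surjective (topDualPairing ℝ X) G
  exact ⟨x, fun _ => rfl⟩

end WeakDual

lemma exists_weakDual_prod_sep {K : Set (WeakDual ℝ X × ℝ)} (hK : Convex ℝ K)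
    (hKcl : IsClosed K) {q : WeakDual ℝ X × ℝ} (hq : q ∉ K) :
    ∃ (x : X) (α u : ℝ), (∀ z ∈ K, z.1 x + α * z.2 < u) ∧ u < q.1 x + α * q.2 := by
  obtain ⟨F, u, hFK, hFq⟩ := geometric_hahn_banach_closed_point hK hKcl hq
  obtain ⟨ℓ, α, hF⟩ := F.exists_eq_prod_real
  obtain ⟨x, hx⟩ := WeakDual.exists_eq_apply ℓ
  simp only [hF, hx] at hFK hFq
  exact ⟨x, α, u, hFK, hFq⟩

section coneGen

variable {V : Type*} [AddCommGroup V] [Module ℝ V] {D : Set V}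

lemma zero_mem_coneGen : (0 : V) ∈ coneGen D := Or.inl rfl

lemma subset_coneGen : D ⊆ coneGen D :=
  fun x hx => Or.inr ⟨1, zero_le_one, x, subset_convexHull ℝ D hx, (one_smul ℝ x).symm⟩

lemma smul_mem_coneGen {t : ℝ} (ht : 0 ≤ t) {z : V} (hz : z ∈ coneGen D) :
    t • z ∈ coneGen D := by
  rcases hz with rfl | ⟨s, hs, x, hx, rfl⟩
  · rw [smul_zero]; exact zero_mem_coneGen
  · exact Or.inr ⟨t * s, mul_nonneg ht hs, x, hx, smul_smul t s x⟩

lemma add_mem_coneGen {y z : V} (hy : y ∈ coneGen D) (hz : z ∈ coneGen D) :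
    y + z ∈ coneGen D := by
  rcases hy with rfl | ⟨s, hs, x, hx, rfl⟩
  · rwa [zero_add]
  rcases hz with rfl | ⟨t, ht, w, hw, rfl⟩
  · rw [add_zero]; exact Or.inr ⟨s, hs, x, hx, rfl⟩
  obtain ⟨c, hc, hsum⟩ := (convex_convexHull ℝ D).exists_mem_add_smul_eq hx hw hs ht
  exact Or.inr ⟨s + t, add_nonneg hs ht, c, hc, hsum.symm⟩

lemma convex_coneGen : Convex ℝ (coneGen D) :=
  fun _ hy _ hz _ _ ha hb _ => add_mem_coneGen (smul_mem_coneGen ha hy) (smul_mem_coneGen hb hz)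

lemma coneGen_subset {P : Set V} (hDP : D ⊆ P) (hP : Convex ℝ P) (h0 : (0 : V) ∈ P)
    (hsmul : ∀ t : ℝ, 0 ≤ t → ∀ x ∈ P, t • x ∈ P) : coneGen D ⊆ P := by
  rintro _ (rfl | ⟨t, ht, x, hx, rfl⟩)
  · exact h0
  · exact hsmul t ht x (convexHull_min hDP hP hx)

end coneGen

lemma isClosed_epiFn {V : Type*} [TopologicalSpace V] {h : V → EReal}
    (hh : LowerSemicontinuous h) : IsClosed (epiFn h) :=
  hh.isClosed_epigraph.preimage
    (continuous_fst.prodMk (continuous_coe_real_ereal.comp continuous_snd))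

lemma epiFn_indicatorE {V : Type*} (D : Set V) : epiFn (indicatorE D) = D ×ˢ Ici 0 := by
  ext ⟨x, t⟩
  by_cases hx : x ∈ D <;> simp [epiFn, indicatorE, hx]

lemma epiFn_add_indicatorE {V : Type*} {g : V → EReal} (hg : ∀ x, g x ≠ ⊥) (A : Set V) :
    epiFn (fun x => g x + indicatorE A x) = {q | q.1 ∈ A ∧ q ∈ epiFn g} := by
  ext ⟨x, t⟩
  by_cases hx : x ∈ A <;> simp [epiFn, indicatorE, hx, EReal.add_top_of_ne_bot (hg x)]

lemma lt_of_mem_interior_epiFn {V : Type*} [TopologicalSpace V] {h : V → EReal} {q : V × ℝ}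
    (hq : q ∈ interior (epiFn h)) : h q.1 < q.2 := by
  have : ∀ᶠ t in 𝓝 q.2, (q.1, t) ∈ epiFn h :=
    (Continuous.prodMk_right q.1).continuousAt.preimage_mem_nhds (mem_interior_iff_mem_nhds.1 hq)
  obtain ⟨t, ht, hmem⟩ := this.exists_lt
  exact hmem.trans_lt (EReal.coe_lt_coe_iff.2 ht)

lemma mem_interior_epiFn_of_continuousAt {V : Type*} [TopologicalSpace V] {h : V → EReal}
    {x : V} {t : ℝ} (hcont : ContinuousAt h x) (ht : h x < t) :
    (x, t) ∈ interior (epiFn h) := by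
  obtain ⟨s, hxs, hst⟩ := EReal.exists_between_coe_real ht
  refine mem_interior_iff_mem_nhds.2 (mem_of_superset (prod_mem_nhds (hcont (Iio_mem_nhds hxs))
    (Ioi_mem_nhds (EReal.coe_lt_coe_iff.1 hst))) ?_)
  rintro ⟨y, r⟩ ⟨hy, hr⟩
  exact (lt_trans hy (EReal.coe_lt_coe_iff.2 hr)).le

lemma mem_epiFn_conjFn_iff {h : X → EReal} {z : WeakDual ℝ X × ℝ} :
    z ∈ epiFn (conjFn h) ↔ ∀ q ∈ epiFn h, z.1 q.1 - z.2 ≤ q.2 := by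
  have key : ∀ x, (z.1 x : EReal) - h x ≤ z.2 ↔
      ∀ t : ℝ, h x ≤ t → z.1 x - z.2 ≤ t := by
    intro x
    induction h x with
    | bot => simpa using ⟨z.1 x - z.2 - 1, by linarith⟩
    | coe v =>
      simp only [← EReal.coe_sub, EReal.coe_le_coe_iff]
      exact ⟨fun h t ht => by linarith, fun h => by linarith [h v le_rfl]⟩
    | top => simp
  simp only [epiFn, conjFn, mem_ofPred_eq, iSup_le_iff, Prod.forall, key]

lemma isClosed_epiFn_conjFn (h : X → EReal) : IsClosed (epiFn (conjFn h)) := by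
  have : epiFn (conjFn h) =
      ⋂ q ∈ epiFn h, {z : WeakDual ℝ X × ℝ | z.1 q.1 - z.2 ≤ q.2} := by
    ext z
    simp only [mem_iInter₂]
    exact mem_epiFn_conjFn_iff
  rw [this]
  exact isClosed_biInter fun q _ => isClosed_le
    (((WeakDual.eval_continuous q.1).comp continuous_fst).sub continuous_snd) continuous_const

lemma mem_epiFn_conjFn_indicatorE_iff {D : Set X} {z : WeakDual ℝ X × ℝ} :
    z ∈ epiFn (conjFn (indicatorE D)) ↔ ∀ x ∈ D, z.1 x ≤ z.2 := by
  rw [mem_epiFn_conjFn_iff, epiFn_indicatorE]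
  refine ⟨fun h x hx => by simpa using h (x, 0) ⟨hx, self_mem_Ici⟩, fun h q hq => ?_⟩
  linarith [h q.1 hq.1, mem_Ici.1 hq.2]

lemma inGamma_indicatorE {D : Set X} (hne : D.Nonempty) (hcl : IsClosed D) (hcv : Convex ℝ D) :
    InGamma (indicatorE D) := by
  refine ⟨fun x => ?_, ⟨hne.some, by simp [indicatorE, hne.some_mem]⟩, ?_, ?_⟩
  · by_cases hx : x ∈ D <;> simp [indicatorE, hx]
  · change Convex ℝ (epiFn (indicatorE D))
    exact epiFn_indicatorE D ▸ hcv.prod (convex_Ici 0)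
  · have : indicatorE D = Dᶜ.indicator fun _ => ⊤ := by
      ext x
      by_cases hx : x ∈ D <;> simp [indicatorE, hx]
    exact this ▸ hcl.isOpen_compl.lowerSemicontinuous_indicator le_top

lemma mem_epiFn_conjFn_of_sub_le_mul {h : X → EReal} {ℓ : StrongDual ℝ X} {β u : ℝ}
    (hβ : 0 < β) (hle : ∀ q ∈ epiFn h, ℓ q.1 - u ≤ β * q.2) :
    (β⁻¹ • StrongDual.toWeakDual ℓ, β⁻¹ * u) ∈ epiFn (conjFn h) := by
  refine mem_epiFn_conjFn_iff.2 fun q hq => ?_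
  have := hle q hq
  simp only [WeakDual.smul_apply, StrongDual.toWeakDual_apply, ← mul_sub]
  rwa [inv_mul_le_iff₀ hβ]

section Separation

variable [IsTopologicalAddGroup X] [ContinuousSMul ℝ X] [LocallyConvexSpace ℝ X]

lemma exists_sep_epiFn_of_lt {h : X → EReal} (hh : InGamma h) {x₀ : X} {c : ℝ}
    (hc : (c : EReal) < h x₀) :
    ∃ (ℓ : StrongDual ℝ X) (β u : ℝ),
      0 ≤ β ∧ (∀ q ∈ epiFn h, ℓ q.1 - u ≤ β * q.2) ∧ β * c < ℓ x₀ - u := by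
  obtain ⟨F, u, hF, hFx₀⟩ :=
    geometric_hahn_banach_closed_point hh.2.2.1 (isClosed_epiFn hh.2.2.2)
      (show (x₀, c) ∉ epiFn h from not_le.2 hc)
  obtain ⟨ℓ, γ, hFeq⟩ := F.exists_eq_prod_real
  simp only [hFeq] at hF hFx₀
  obtain ⟨x₁, hx₁⟩ := hh.2.1
  obtain ⟨t₁, ht₁, -⟩ := EReal.exists_between_coe_real (lt_top_iff_ne_top.2 hx₁)
  have hγ : γ ≤ 0 := nonpos_of_forall_le_add_mul (m := ℓ x₁) fun t (ht : t₁ ≤ t) =>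
    (hF (x₁, t) (ht₁.le.trans (EReal.coe_le_coe_iff.2 ht))).le
  exact ⟨ℓ, -γ, u, neg_nonneg.2 hγ,
    fun q hq => by linarith [hF q hq], by linarith⟩

lemma epiFn_conjFn_nonempty {h : X → EReal} (hh : InGamma h) : (epiFn (conjFn h)).Nonempty := by
  obtain ⟨x₁, hx₁⟩ := hh.2.1
  obtain ⟨v, hv⟩ : ∃ v : ℝ, h x₁ = v :=
    ⟨(h x₁).toReal, (EReal.coe_toReal hx₁ (hh.1 x₁)).symm⟩
  obtain ⟨ℓ, β, u, hβ, hle, hlt⟩ := exists_sep_epiFn_of_lt hh (x₀ := x₁) (c := v - 1)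
    (hv ▸ EReal.coe_lt_coe_iff.2 (by linarith))
  have hβ : 0 < β := by
    have := hle (x₁, v) (hv.le : h x₁ ≤ v)
    nlinarith
  exact ⟨_, mem_epiFn_conjFn_of_sub_le_mul hβ hle⟩

lemma exists_mem_epiFn_conjFn_lt {h : X → EReal} (hh : InGamma h) {x₀ : X} {c : ℝ}
    (hc : (c : EReal) < h x₀) : ∃ z ∈ epiFn (conjFn h), c < z.1 x₀ - z.2 := by
  obtain ⟨ℓ, β, u, hβ, hle, hlt⟩ := exists_sep_epiFn_of_lt hh hc
  rcases hβ.lt_or_eq with hβ | rfl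
  · refine ⟨_, mem_epiFn_conjFn_of_sub_le_mul hβ hle, ?_⟩
    simp only [WeakDual.smul_apply, StrongDual.toWeakDual_apply, ← mul_sub]
    rwa [lt_inv_mul_iff₀ hβ]
  -- a vertical separator is added, with a large weight, to any affine minorant
  obtain ⟨z, hz⟩ := epiFn_conjFn_nonempty hh
  set d := ℓ x₀ - u
  set s := (|c - (z.1 x₀ - z.2)| + 1) / d
  have hd : 0 < d := by simpa using hlt
  refine ⟨(z.1 + s • StrongDual.toWeakDual ℓ, z.2 + s * u),
    mem_epiFn_conjFn_iff.2 fun q hq => ?_, ?_⟩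
  · have h₁ := mem_epiFn_conjFn_iff.1 hz q hq
    have h₂ := hle q hq
    have hs : 0 ≤ s := by positivity
    simp only [zero_mul] at h₂
    simp only [WeakDual.add_apply, WeakDual.smul_apply, StrongDual.toWeakDual_apply]
    nlinarith
  · have hsd : s * d = |c - (z.1 x₀ - z.2)| + 1 := div_mul_cancel₀ _ hd.ne'
    simp only [WeakDual.add_apply, WeakDual.smul_apply, StrongDual.toWeakDual_apply]
    nlinarith [le_abs_self (c - (z.1 x₀ - z.2))]

lemma le_of_forall_mem_epiFn_conjFn {h : X → EReal} (hh : InGamma h) {x : X} {c : ℝ}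
    (hc : ∀ z ∈ epiFn (conjFn h), z.1 x - z.2 ≤ c) : h x ≤ c := by
  by_contra! hlt
  obtain ⟨z, hz, hcz⟩ := exists_mem_epiFn_conjFn_lt hh hlt
  linarith [hc z hz]

end Separation

omit [TopologicalSpace X] in
lemma convex_solSet {I : Type*} {C : Set X} {f : I → X → EReal} (hC : Convex ℝ C)
    (hf : ∀ i, Convex ℝ (epiFn (f i))) : Convex ℝ (solSet C f) := by
  have hsub : ∀ i, Convex ℝ {x | f i x ≤ 0} := fun i => by
    simpa [epiFn] using (hf i).linear_preimage (LinearMap.inl ℝ X ℝ)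
  have : solSet C f = C ∩ ⋂ i, {x | f i x ≤ 0} := by ext; simp [solSet]
  exact this ▸ hC.inter (convex_iInter hsub)

section Farkas

variable {I : Type*} {C : Set X} {f : I → X → EReal}

lemma charCone_subset_epiFn_conjFn_indicatorE_solSet :
    charCone C f ⊆ epiFn (conjFn (indicatorE (solSet C f))) := by
  refine coneGen_subset ?_ ?_ ?_ ?_
  · rintro z (hz | hz) <;> refine mem_epiFn_conjFn_indicatorE_iff.2 fun x hx => ?_
    · exact mem_epiFn_conjFn_indicatorE_iff.1 hz x hx.1
    · obtain ⟨i, hz⟩ := mem_iUnion.1 hz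
      have := mem_epiFn_conjFn_iff.1 hz (x, 0) (hx.2 i)
      linarith
  · intro z hz w hw a b ha hb _
    rw [mem_epiFn_conjFn_indicatorE_iff] at hz hw ⊢
    intro x hx
    simp only [Prod.fst_add, Prod.snd_add, Prod.smul_fst, Prod.smul_snd, WeakDual.add_apply,
      WeakDual.smul_apply, smul_eq_mul]
    gcongr
    exacts [hz x hx, hw x hx]
  · exact mem_epiFn_conjFn_indicatorE_iff.2 fun x _ => le_of_eq (WeakDual.zero_apply x)
  · intro t ht z hz
    rw [mem_epiFn_conjFn_indicatorE_iff] at hz ⊢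
    intro x hx
    simp only [Prod.smul_fst, Prod.smul_snd, WeakDual.smul_apply, smul_eq_mul]
    exact mul_le_mul_of_nonneg_left (hz x hx) ht

variable [IsTopologicalAddGroup X] [ContinuousSMul ℝ X] [LocallyConvexSpace ℝ X]

lemma mem_solSet_of_forall_mem_charCone (hCne : C.Nonempty) (hCcl : IsClosed C)
    (hCcv : Convex ℝ C) (hf : ∀ i, InGamma (f i)) {y : X}
    (hy : ∀ z ∈ charCone C f, z.1 y ≤ z.2) : y ∈ solSet C f := by
  have hle : ∀ {h : X → EReal}, InGamma h → epiFn (conjFn h) ⊆ charCone C f → h y ≤ 0 :=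
    fun hh hsub => by
      simpa using le_of_forall_mem_epiFn_conjFn hh (c := 0) fun z hz =>
        sub_nonpos.2 (hy z (hsub hz))
  refine ⟨?_, fun i => hle (hf i) fun z hz =>
    subset_coneGen (Or.inr (mem_iUnion.2 ⟨i, hz⟩))⟩
  by_contra hyC
  have := hle (inGamma_indicatorE hCne hCcl hCcv) fun z hz => subset_coneGen (Or.inl hz)
  simp [indicatorE, hyC] at this

lemma add_mul_nonpos_of_forall_mem_charCone (hCne : C.Nonempty) (hCcl : IsClosed C)
    (hCcv : Convex ℝ C) (hf : ∀ i, InGamma (f i)) (hA : (solSet C f).Nonempty)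
    {x : X} {α : ℝ} (hK : ∀ z ∈ charCone C f, z.1 x + α * z.2 ≤ 0)
    {q : WeakDual ℝ X × ℝ} (hq : q ∈ epiFn (conjFn (indicatorE (solSet C f)))) :
    q.1 x + α * q.2 ≤ 0 := by
  obtain ⟨a, ha⟩ := hA
  have hqA := mem_epiFn_conjFn_indicatorE_iff.1 hq
  have hα : α ≤ 0 := by
    simpa using hK (0, 1) (subset_coneGen (Or.inl (mem_epiFn_conjFn_indicatorE_iff.2
      fun x _ => (WeakDual.zero_apply x).trans_le zero_le_one)))
  by_contra! hs
  set s := q.1 x + α * q.2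
  set d := q.2 - q.1 a
  have hd : 0 ≤ d := sub_nonneg.2 (hqA a ha)
  set ε := s / (d + 1)
  have hε : 0 < ε := by positivity
  -- tilting `(x, α)` by `ε (a, -1)` keeps it in the polar of `K`, with a negative `ℝ`-component
  have hy : (ε - α)⁻¹ • (x + ε • a) ∈ solSet C f :=
    mem_solSet_of_forall_mem_charCone hCne hCcl hCcv hf fun z hz => by
      have h₁ := hK z hz
      have h₂ := mem_epiFn_conjFn_indicatorE_iff.1
        (charCone_subset_epiFn_conjFn_indicatorE_solSet hz) a ha
      rw [map_smul, map_add, map_smul, smul_eq_mul, smul_eq_mul, inv_mul_le_iff₀ (by linarith)]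
      nlinarith [mul_le_mul_of_nonneg_left h₂ hε.le]
  have h₃ := hqA _ hy
  rw [map_smul, map_add, map_smul, smul_eq_mul, smul_eq_mul,
    inv_mul_le_iff₀ (by linarith)] at h₃
  have : ε * (d + 1) = s := div_mul_cancel₀ _ (by linarith)
  nlinarith

lemma charCone_eq_epiFn_conjFn_indicatorE_solSet (hCne : C.Nonempty) (hCcl : IsClosed C)
    (hCcv : Convex ℝ C) (hf : ∀ i, InGamma (f i)) (hFM : IsFM C f) :
    charCone C f = epiFn (conjFn (indicatorE (solSet C f))) := by
  refine charCone_subset_epiFn_conjFn_indicatorE_solSet.antisymm fun q hq => ?_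
  by_contra hqK
  obtain ⟨x, α, u, hK, hqu⟩ := exists_weakDual_prod_sep convex_coneGen hFM.2 hqK
  have hK' : ∀ z ∈ charCone C f, z.1 x + α * z.2 ≤ 0 := fun z hz =>
    nonpos_of_forall_le_add_mul (m := 0) (t₀ := 0) (u := u) fun t ht => by
      have := (hK _ (smul_mem_coneGen ht hz)).le
      simp only [Prod.smul_fst, Prod.smul_snd, WeakDual.smul_apply, smul_eq_mul] at this
      linear_combination this
  have hu : 0 < u := by simpa using hK 0 zero_mem_coneGen
  linarith [add_mul_nonpos_of_forall_mem_charCone hCne hCcl hCcv hf hFM.1 hK' hq]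

end Farkas

section SumRule

variable [IsTopologicalAddGroup X] [ContinuousSMul ℝ X]

lemma exists_nonvertical_sep_of_disjoint_interior {g : X → EReal}
    (hgcv : Convex ℝ (epiFn g)) {a : X} (hga : g a ≠ ⊤) (hcont : ContinuousAt g a)
    {B : Set (X × ℝ)} (hB : Convex ℝ B) (hdisj : Disjoint (interior (epiFn g)) B) {s : ℝ}
    (haB : (a, s) ∈ B) :
    ∃ (ℓ : StrongDual ℝ X) (β u : ℝ), 0 < β ∧ (∀ q ∈ epiFn g, ℓ q.1 - u ≤ β * q.2) ∧
      ∀ q ∈ B, β * q.2 ≤ ℓ q.1 - u := by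
  obtain ⟨t₀, ht₀, -⟩ := EReal.exists_between_coe_real (lt_top_iff_ne_top.2 hga)
  have hint : ∀ t, t₀ ≤ t → (a, t) ∈ interior (epiFn g) := fun t ht =>
    mem_interior_epiFn_of_continuousAt hcont (ht₀.trans_le (EReal.coe_le_coe_iff.2 ht))
  obtain ⟨F, u, hFint, hFB⟩ := geometric_hahn_banach_open hgcv.interior isOpen_interior hB hdisj
  have hFg : ∀ q ∈ epiFn g, F q ≤ u := fun q hq =>
    closure_minimal (fun q hq => (hFint q hq).le) (isClosed_le F.continuous continuous_const) <|
      hgcv.closure_interior_eq_closure_of_nonempty_interior ⟨_, hint t₀ le_rfl⟩ ▸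
        subset_closure hq
  obtain ⟨ℓ, γ, hF⟩ := F.exists_eq_prod_real
  simp only [hF] at hFint hFB hFg
  have hγ : γ ≤ 0 := nonpos_of_forall_le_add_mul (m := ℓ a)
    fun t (ht : t₀ ≤ t) => hFg _ (interior_subset (hint t ht))
  have hγ' : γ ≠ 0 := fun hγ0 => by
    have h₁ := hFint _ (hint t₀ le_rfl)
    have h₂ := hFB _ haB
    simp only [hγ0, zero_mul, add_zero] at h₁ h₂
    linarith
  exact ⟨ℓ, -γ, u, neg_pos.2 (hγ.lt_of_ne hγ'),
    fun q hq => by linarith [hFg q hq], fun q hq => by linarith [hFB q hq]⟩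

lemma epiFn_conjFn_add_indicatorE {g : X → EReal} {A : Set X} (hg : ∀ x, g x ≠ ⊥)
    (hgcv : Convex ℝ (epiFn g)) (hA : Convex ℝ A) {a : X} (ha : a ∈ A) (hga : g a ≠ ⊤)
    (hcont : ContinuousAt g a) :
    epiFn (conjFn g) + epiFn (conjFn (indicatorE A)) =
      epiFn (conjFn (fun x => g x + indicatorE A x)) := by
  refine subset_antisymm ?_ fun z hz => ?_
  · rintro _ ⟨z₁, hz₁, z₂, hz₂, rfl⟩
    refine mem_epiFn_conjFn_iff.2 fun q hq => ?_
    rw [epiFn_add_indicatorE hg] at hq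
    have h₁ := mem_epiFn_conjFn_iff.1 hz₁ q hq.2
    have h₂ := mem_epiFn_conjFn_indicatorE_iff.1 hz₂ q.1 hq.1
    simp only [Prod.fst_add, Prod.snd_add, WeakDual.add_apply]
    linarith
  rw [mem_epiFn_conjFn_iff, epiFn_add_indicatorE hg] at hz
  set B := {q : X × ℝ | q.1 ∈ A ∧ q.2 ≤ z.1 q.1 - z.2}
  have hB : Convex ℝ B := fun q hq w hw s t hs ht hst => by
    refine ⟨hA hq.1 hw.1 hs ht hst, ?_⟩
    simp only [Prod.fst_add, Prod.snd_add, Prod.smul_fst, Prod.smul_snd, smul_eq_mul, map_add,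
      map_smul]
    linear_combination mul_le_mul_of_nonneg_left hq.2 hs + mul_le_mul_of_nonneg_left hw.2 ht +
      -z.2 * hst
  have hdisj : Disjoint (interior (epiFn g)) B := by
    refine disjoint_left.2 fun q hqi hqB => ?_
    obtain ⟨t, hgt, htq⟩ := EReal.exists_between_coe_real (lt_of_mem_interior_epiFn hqi)
    linarith [hz (q.1, t) ⟨hqB.1, hgt.le⟩, hqB.2, EReal.coe_lt_coe_iff.1 htq]
  obtain ⟨ℓ, β, u, hβ, hℓg, hℓB⟩ :=
    exists_nonvertical_sep_of_disjoint_interior hgcv hga hcont hB hdisj (s := z.1 a - z.2)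
      ⟨ha, le_rfl⟩
  have hz₂ : z - (β⁻¹ • StrongDual.toWeakDual ℓ, β⁻¹ * u) ∈
      epiFn (conjFn (indicatorE A)) := by
    refine mem_epiFn_conjFn_indicatorE_iff.2 fun x hx => ?_
    have := (le_inv_mul_iff₀ hβ).2 (hℓB (x, z.1 x - z.2) ⟨hx, le_rfl⟩)
    simp only [Prod.fst_sub, Prod.snd_sub, WeakDual.sub_apply, WeakDual.smul_apply,
      StrongDual.toWeakDual_apply]
    linarith [mul_sub β⁻¹ (ℓ x) u]
  simpa using add_mem_add (mem_epiFn_conjFn_of_sub_le_mul hβ hℓg) hz₂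

end SumRule

theorem stmt5_general [IsTopologicalAddGroup X] [ContinuousSMul ℝ X] [LocallyConvexSpace ℝ X] {I : Type*} (C : Set X) (hCne : C.Nonempty) (hCcl : IsClosed C) (hCcv : Convex ℝ C)
    (f : I → X → EReal) (hf : ∀ i, InGamma (f i))
    (g : X → EReal) (hg : InGamma g)
    (hFM : IsFM C f)
    (hcont : ∃ a ∈ solSet C f, (∃ r : ℝ, g a = (r : EReal)) ∧ ContinuousAt g a) :
    epiFn (conjFn g) + charCone C f =
        epiFn (conjFn (fun x => g x + indicatorE (solSet C f) x)) ∧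
      IsClosed (epiFn (conjFn g) + charCone C f) := by
  obtain ⟨a, ha, ⟨r, hr⟩, hconta⟩ := hcont
  have hA : Convex ℝ (solSet C f) := convex_solSet hCcv fun i => (hf i).2.2.1
  rw [charCone_eq_epiFn_conjFn_indicatorE_solSet hCne hCcl hCcv hf hFM,
    epiFn_conjFn_add_indicatorE hg.1 hg.2.2.1 hA ha (hr ▸ EReal.coe_ne_top r) hconta]
  exact ⟨rfl, isClosed_epiFn_conjFn _⟩

/-- Lemma 4: under FM and continuity of `f` at a point of `A`,
`epi f* + K = epi (f + δ_A)*` and in particular `epi f* + K` is weak*-closed. -/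
theorem stmt5 [IsTopologicalAddGroup X] [ContinuousSMul ℝ X] [LocallyConvexSpace ℝ X] [T2Space X] {I : Type*} (C : Set X) (hCne : C.Nonempty) (hCcl : IsClosed C) (hCcv : Convex ℝ C)
    (f : I → X → EReal) (hf : ∀ i, InGamma (f i))
    (g : X → EReal) (hg : InGamma g)
    (hFM : IsFM C f)
    (hcont : ∃ a ∈ solSet C f, (∃ r : ℝ, g a = (r : EReal)) ∧ ContinuousAt g a) :
    epiFn (conjFn g) + charCone C f =
        epiFn (conjFn (fun x => g x + indicatorE (solSet C f) x)) ∧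
      IsClosed (epiFn (conjFn g) + charCone C f) :=
  stmt5_general C hCne hCcl hCcv f hf g hg hFM hcont
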